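/- Let φ₂(x) = 64 x (x²−x−1)⁵/((x²−1)(x²+4x−1)⁵). For x real with |x| sufficiently small, ₂F₁(7/20, −1/20; 4/5; φ₂(x)) = (1+x)^{7/20} · (1−x)^{−1/20} · (1−4x−x²)^{−1/4}, where ₂F₁ is the Gauss hypergeometric series. -/

import Mathlib

/-- The Gauss hypergeometric series `₂F₁(a, b; c; x)`, as a sum over `n` of
`(a)ₙ (b)ₙ / ((c)ₙ n!) · xⁿ` where `(a)ₙ` is the rising factorial. -/
noncomputable def hyp (a b c x : ℝ) : ℝ :=
  ∑' n : ℕ, ((ascPochhammer ℝ n).eval a * (ascPochhammer ℝ n).eval b /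
    ((ascPochhammer ℝ n).eval c * (Nat.factorial n))) * x ^ n

/-- The degree-12 Darboux covering for the Schwartz type (1/2, 1/5, 2/5). -/
noncomputable def phi2 (x : ℝ) : ℝ :=
  64 * x * (x ^ 2 - x - 1) ^ 5 / ((x ^ 2 - 1) * (x ^ 2 + 4 * x - 1) ^ 5)

namespace DX
open Filter Metric Real Topology
open scoped NNReal ENNReal

/-- coefficients of the hypergeometric series -/
noncomputable def qc (n : ℕ) : ℝ :=
  (ascPochhammer ℝ n).eval (7/20) * (ascPochhammer ℝ n).eval (-1/20) /
    ((ascPochhammer ℝ n).eval (4/5) * (Nat.factorial n))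

lemma poch_pos (t : ℝ) (ht : 0 < t) (n : ℕ) : 0 < (ascPochhammer ℝ n).eval t := by
  induction n with
  | zero => simp [ascPochhammer_zero]
  | succ n ih =>
    rw [ascPochhammer_succ_eval]
    positivity

lemma qc_zero : qc 0 = 1 := by
  simp [qc, ascPochhammer_zero]

lemma qc_rec (n : ℕ) :
    qc (n+1) * (((n:ℝ)+1) * ((n:ℝ) + 4/5)) = qc n * (((n:ℝ) + 7/20) * ((n:ℝ) + (-1/20))) := by
  have hc : (0:ℝ) < (ascPochhammer ℝ n).eval (4/5) := poch_pos _ (by norm_num) n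
  have hfac : (0:ℝ) < (Nat.factorial n : ℝ) := by positivity
  rw [qc, qc, ascPochhammer_succ_eval, ascPochhammer_succ_eval, ascPochhammer_succ_eval,
    Nat.factorial_succ]
  push_cast
  field_simp
  ring

lemma qc_abs_le (n : ℕ) : |qc n| ≤ 1 := by
  induction n with
  | zero => simp [qc_zero]
  | succ n ih =>
    have hn : (0:ℝ) ≤ (n:ℝ) := Nat.cast_nonneg n
    have hpos : (0:ℝ) < ((n:ℝ)+1) * ((n:ℝ) + 4/5) := by positivity
    have h1 : |qc (n+1)| * (((n:ℝ)+1) * ((n:ℝ) + 4/5))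
        = |qc n| * |((n:ℝ) + 7/20) * ((n:ℝ) + (-1/20))| := by
      rw [← abs_of_pos hpos, ← abs_mul, qc_rec n, abs_mul]
    have h2 : |((n:ℝ) + 7/20) * ((n:ℝ) + (-1/20))| ≤ ((n:ℝ)+1) * ((n:ℝ) + 4/5) := by
      rw [abs_le]
      constructor <;> nlinarith
    have h3 : |qc (n+1)| * (((n:ℝ)+1) * ((n:ℝ) + 4/5)) ≤ 1 * (((n:ℝ)+1) * ((n:ℝ) + 4/5)) := by
      rw [h1, one_mul]
      calc |qc n| * |((n:ℝ) + 7/20) * ((n:ℝ) + (-1/20))|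
          ≤ 1 * (((n:ℝ)+1) * ((n:ℝ) + 4/5)) :=
            mul_le_mul ih h2 (abs_nonneg _) zero_le_one
        _ = ((n:ℝ)+1) * ((n:ℝ) + 4/5) := one_mul _
    exact le_of_mul_le_mul_right (by simpa using h3) hpos

lemma pow43_pow34 (j : ℕ) : ((4:ℝ)/3)^j * (3/4)^j = 1 := by
  rw [← mul_pow]; norm_num

lemma geom_aux (j n : ℕ) : ((3:ℝ)/4)^(n-j) ≤ (4/3)^j * (3/4)^n := by
  have key : ((3:ℝ)/4)^(n-j+j) ≤ (3/4)^n :=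
    pow_le_pow_of_le_one (by norm_num) (by norm_num) le_tsub_add
  have h0 : ((3:ℝ)/4)^(n-j) = (4/3)^j * (3/4)^(n-j+j) := by
    rw [pow_add, mul_left_comm, pow43_pow34, mul_one]
  rw [h0]
  exact mul_le_mul_of_nonneg_left key (by positivity)

lemma summable_sq_geom : Summable (fun n : ℕ => ((n:ℝ)+1)^2 * (3/4)^n) := by
  have h0 : Summable (fun n : ℕ => ((n:ℝ))^2 * (3/4)^n) := by
    simpa using summable_pow_mul_geometric_of_norm_lt_one (R := ℝ) 2
      (r := 3/4) (by rw [Real.norm_eq_abs]; norm_num [abs_lt])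
  have h1 : Summable (fun n : ℕ => ((n:ℝ))^1 * (3/4)^n) := by
    simpa using summable_pow_mul_geometric_of_norm_lt_one (R := ℝ) 1
      (r := 3/4) (by rw [Real.norm_eq_abs]; norm_num [abs_lt])
  have h2 : Summable (fun n : ℕ => ((3:ℝ)/4)^n) :=
    summable_geometric_of_lt_one (by norm_num) (by norm_num)
  have := (h0.add ((h1.mul_left 2).add h2))
  refine this.congr fun n => ?_
  simp only [pow_one]
  ring

/-- master summability lemma -/
lemma summable_main {w : ℝ} (hw : |w| < 3/4) (c : ℕ → ℝ) (j : ℕ)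
    (hc : ∀ n, |c n| ≤ ((n:ℝ)+1)^2) : Summable (fun n => c n * w^(n-j)) := by
  refine Summable.of_norm_bounded (g := fun n => ((4:ℝ)/3)^j * (((n:ℝ)+1)^2 * (3/4)^n))
    ((summable_sq_geom.mul_left _)) fun n => ?_
  rw [Real.norm_eq_abs, abs_mul, abs_pow]
  calc |c n| * |w|^(n-j) ≤ ((n:ℝ)+1)^2 * (3/4)^(n-j) := by
        apply mul_le_mul (hc n) (pow_le_pow_left₀ (abs_nonneg w) hw.le _) (by positivity)
        positivity
    _ ≤ ((n:ℝ)+1)^2 * ((4/3)^j * (3/4)^n) := by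
        apply mul_le_mul_of_nonneg_left (geom_aux j n) (by positivity)
    _ = (4/3)^j * (((n:ℝ)+1)^2 * (3/4)^n) := by ring

noncomputable def ff (w : ℝ) : ℝ := ∑' n : ℕ, qc n * w ^ n
noncomputable def ff1 (w : ℝ) : ℝ := ∑' n : ℕ, qc n * ((n:ℝ) * w ^ (n-1))
noncomputable def ff2 (w : ℝ) : ℝ :=
  ∑' n : ℕ, qc n * ((n:ℝ) * ((((n-1 : ℕ)):ℝ) * w ^ (n-1-1)))

lemma abs_qc_cast_le (n : ℕ) : |qc n * (n:ℝ)| ≤ ((n:ℝ)+1)^2 := by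
  rw [abs_mul, Nat.abs_cast]
  have h := qc_abs_le n
  have : (0:ℝ) ≤ (n:ℝ) := Nat.cast_nonneg n
  nlinarith

lemma abs_qc_cast2_le (n : ℕ) : |qc n * (n:ℝ) * ((n-1 : ℕ):ℝ)| ≤ ((n:ℝ)+1)^2 := by
  rw [abs_mul, abs_mul, Nat.abs_cast, Nat.abs_cast]
  have h1 := qc_abs_le n
  have h2 : ((n-1 : ℕ):ℝ) ≤ (n:ℝ) := Nat.cast_le.mpr (Nat.sub_le n 1)
  have h3 : (0:ℝ) ≤ ((n-1:ℕ):ℝ) := Nat.cast_nonneg _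
  have hn : (0:ℝ) ≤ (n:ℝ) := Nat.cast_nonneg n
  have h4 : |qc n| * (n:ℝ) ≤ (n:ℝ) := by nlinarith [abs_nonneg (qc n)]
  nlinarith [abs_nonneg (qc n)]

lemma summable_t0 {w : ℝ} (hw : |w| < 3/4) : Summable (fun n : ℕ => qc n * w ^ n) := by
  have := summable_main hw qc 0 (fun n => by
    have h := qc_abs_le n
    have : (0:ℝ) ≤ (n:ℝ) := Nat.cast_nonneg n
    nlinarith)
  simpa using this

lemma summable_t1 {w : ℝ} (hw : |w| < 3/4) :
    Summable (fun n : ℕ => qc n * ((n:ℝ) * w ^ (n-1))) := by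
  have := summable_main hw (fun n => qc n * (n:ℝ)) 1 abs_qc_cast_le
  exact this.congr fun n => by ring

lemma summable_t2 {w : ℝ} (hw : |w| < 3/4) :
    Summable (fun n : ℕ => qc n * ((n:ℝ) * (((n-1 : ℕ):ℝ) * w ^ (n-1-1)))) := by
  have := summable_main hw (fun n => qc n * (n:ℝ) * ((n-1 : ℕ):ℝ)) 2 abs_qc_cast2_le
  exact this.congr fun n => by rw [show n-2 = n-1-1 by omega]; ring

lemma mem_ball34 {y : ℝ} : y ∈ ball (0:ℝ) (3/4) ↔ |y| < 3/4 := by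
  rw [mem_ball, Real.dist_eq, sub_zero]

lemma hasDerivAt_ff {y : ℝ} (hy : |y| < 3/4) : HasDerivAt ff (ff1 y) y := by
  refine hasDerivAt_tsum_of_isPreconnected (y₀ := 0)
    (u := fun n : ℕ => (4/3) * (((n:ℝ)+1)^2 * (3/4)^n))
    (summable_sq_geom.mul_left _) isOpen_ball ((convex_ball _ _).isPreconnected)
    (fun n z _ => (hasDerivAt_pow n z).const_mul (qc n)) ?_ ?_ ?_ (mem_ball34.mpr hy)
  · intro n z hz
    rw [mem_ball34] at hz
    rw [Real.norm_eq_abs]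
    calc |qc n * ((n:ℝ) * z ^ (n-1))| = |qc n * (n:ℝ)| * |z|^(n-1) := by
          rw [← abs_pow, ← abs_mul]; ring_nf
      _ ≤ ((n:ℝ)+1)^2 * (3/4)^(n-1) := by
          apply mul_le_mul (abs_qc_cast_le n) (pow_le_pow_left₀ (abs_nonneg z) hz.le _)
            (by positivity) (by positivity)
      _ ≤ ((n:ℝ)+1)^2 * ((4/3)^1 * (3/4)^n) :=
          mul_le_mul_of_nonneg_left (geom_aux 1 n) (by positivity)
      _ = (4/3) * (((n:ℝ)+1)^2 * (3/4)^n) := by ring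
  · exact mem_ball_self (by norm_num)
  · exact summable_t0 (by norm_num)

lemma hasDerivAt_ff1 {y : ℝ} (hy : |y| < 3/4) : HasDerivAt ff1 (ff2 y) y := by
  refine hasDerivAt_tsum_of_isPreconnected (y₀ := 0)
    (u := fun n : ℕ => (4/3)^2 * (((n:ℝ)+1)^2 * (3/4)^n))
    (summable_sq_geom.mul_left _) isOpen_ball ((convex_ball _ _).isPreconnected)
    (fun n z _ => by
      have h := (hasDerivAt_pow (n-1) z).const_mul (qc n * (n:ℝ))
      simpa [mul_assoc] using h) ?_ ?_ ?_ (mem_ball34.mpr hy)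
  · intro n z hz
    rw [mem_ball34] at hz
    rw [Real.norm_eq_abs]
    calc |qc n * ((n:ℝ) * (((n-1:ℕ):ℝ) * z ^ (n-1-1)))|
        = |qc n * (n:ℝ) * ((n-1:ℕ):ℝ)| * |z|^(n-1-1) := by
          rw [← abs_pow, ← abs_mul]; ring_nf
      _ ≤ ((n:ℝ)+1)^2 * (3/4)^(n-1-1) := by
          apply mul_le_mul (abs_qc_cast2_le n) (pow_le_pow_left₀ (abs_nonneg z) hz.le _)
            (by positivity) (by positivity)
      _ ≤ ((n:ℝ)+1)^2 * ((4/3)^2 * (3/4)^n) := by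
          rw [show n-1-1 = n-2 by omega]
          exact mul_le_mul_of_nonneg_left (geom_aux 2 n) (by positivity)
      _ = (4/3)^2 * (((n:ℝ)+1)^2 * (3/4)^n) := by ring
  · exact mem_ball_self (by norm_num)
  · exact summable_t1 (by norm_num)

lemma ffODE {w : ℝ} (hw : |w| < 3/4) :
    w*(1-w) * ff2 w + (4/5 - (13/10)*w) * ff1 w - ((7/20)*(-1/20)) * ff w = 0 := by
  have S0 := summable_t0 hw
  have S1 := summable_t1 hw
  have S2 := summable_t2 hw
  set Aa : ℕ → ℝ := fun n => qc n * ((n:ℝ)*((n:ℝ) - 1 + 4/5)) * w^(n-1) with hAa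
  set Bb : ℕ → ℝ := fun n => qc n * (((n:ℝ) + 7/20)*((n:ℝ) + (-1/20))) * w^n with hBb
  have SA : Summable Aa := by
    refine summable_main hw (fun n => qc n * ((n:ℝ)*((n:ℝ) - 1 + 4/5))) 1 fun n => ?_
    have h := qc_abs_le n
    have hn : (0:ℝ) ≤ (n:ℝ) := Nat.cast_nonneg n
    rw [abs_mul]
    have h2 : |(n:ℝ)*((n:ℝ) - 1 + 4/5)| ≤ ((n:ℝ)+1)^2 := by
      rw [abs_le]; constructor <;> nlinarith
    nlinarith [abs_nonneg (qc n), abs_nonneg ((n:ℝ)*((n:ℝ) - 1 + 4/5))]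
  have SB : Summable Bb := by
    have := summable_main hw (fun n => qc n * (((n:ℝ) + 7/20)*((n:ℝ) + (-1/20)))) 0 fun n => ?_
    · exact this.congr fun n => by rw [Nat.sub_zero]
    have h := qc_abs_le n
    have hn : (0:ℝ) ≤ (n:ℝ) := Nat.cast_nonneg n
    rw [abs_mul]
    have h2 : |((n:ℝ) + 7/20)*((n:ℝ) + (-1/20))| ≤ ((n:ℝ)+1)^2 := by
      rw [abs_le]; constructor <;> nlinarith
    nlinarith [abs_nonneg (qc n), abs_nonneg (((n:ℝ) + 7/20)*((n:ℝ) + (-1/20)))]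
  have key : ∀ n : ℕ,
      (w*(1-w)) * (qc n * ((n:ℝ) * (((n-1:ℕ):ℝ) * w^(n-1-1))))
      + (4/5 - (13/10)*w) * (qc n * ((n:ℝ) * w^(n-1)))
      - ((7/20)*(-1/20)) * (qc n * w^n) = Aa n - Bb n := by
    intro n
    match n with
    | 0 => simp [hAa, hBb]; ring
    | 1 => simp [hAa, hBb]; ring
    | (m+2) =>
      simp only [hAa, hBb, show m+2-1 = m+1 from rfl, show m+1-1 = m from rfl]
      push_cast
      ring
  calc w*(1-w) * ff2 w + (4/5 - (13/10)*w) * ff1 w - ((7/20)*(-1/20)) * ff w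
      = (∑' n, (w*(1-w)) * (qc n * ((n:ℝ) * (((n-1:ℕ):ℝ) * w^(n-1-1)))))
        + (∑' n, (4/5 - (13/10)*w) * (qc n * ((n:ℝ) * w^(n-1))))
        - (∑' n, ((7/20)*(-1/20)) * (qc n * w^n)) := by
        rw [ff, ff1, ff2, tsum_mul_left, tsum_mul_left, tsum_mul_left]
    _ = ∑' n, ((w*(1-w)) * (qc n * ((n:ℝ) * (((n-1:ℕ):ℝ) * w^(n-1-1))))
        + (4/5 - (13/10)*w) * (qc n * ((n:ℝ) * w^(n-1)))
        - ((7/20)*(-1/20)) * (qc n * w^n)) := by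
        rw [← Summable.tsum_add (S2.mul_left _) (S1.mul_left _),
          ← Summable.tsum_sub ((S2.mul_left _).add (S1.mul_left _)) (S0.mul_left _)]
    _ = ∑' n, (Aa n - Bb n) := tsum_congr key
    _ = (∑' n, Aa n) - (∑' n, Bb n) := Summable.tsum_sub SA SB
    _ = 0 := by
        rw [Summable.tsum_eq_zero_add SA]
        have hA0 : Aa 0 = 0 := by simp [hAa]
        rw [hA0, zero_add]
        have : ∀ n : ℕ, Aa (n+1) = Bb n := by
          intro n
          simp only [hAa, hBb, show n+1-1 = n from rfl]
          push_cast
          linear_combination w^n * qc_rec n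
        rw [tsum_congr this, sub_self]

noncomputable def Pn (x : ℝ) : ℝ := 64 * x * (x ^ 2 - x - 1) ^ 5
noncomputable def Pd (x : ℝ) : ℝ := (x ^ 2 - 1) * (x ^ 2 + 4 * x - 1) ^ 5
noncomputable def Pn' (x : ℝ) : ℝ :=
  64 * (x^2 - x - 1)^5 + 64 * x * (5 * (x^2 - x - 1)^4 * (2*x - 1))
noncomputable def Pn'' (x : ℝ) : ℝ :=
  640 * (x^2 - x - 1)^4 * (2*x - 1) + 1280 * x * (x^2 - x - 1)^3 * (2*x - 1)^2
    + 640 * x * (x^2 - x - 1)^4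
noncomputable def Pd' (x : ℝ) : ℝ :=
  2 * x * (x^2 + 4*x - 1)^5 + (x^2 - 1) * (5 * (x^2 + 4*x - 1)^4 * (2*x + 4))
noncomputable def Pd'' (x : ℝ) : ℝ :=
  2 * (x^2 + 4*x - 1)^5 + 20 * x * (x^2 + 4*x - 1)^4 * (2*x + 4)
    + (x^2 - 1) * (20 * (x^2 + 4*x - 1)^3 * (2*x + 4)^2 + 10 * (x^2 + 4*x - 1)^4)

noncomputable def phid (x : ℝ) : ℝ := (Pn' x * Pd x - Pn x * Pd' x) / (Pd x)^2
noncomputable def phidd (x : ℝ) : ℝ :=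
  ((Pn'' x * Pd x - Pn x * Pd'' x) * Pd x - (Pn' x * Pd x - Pn x * Pd' x) * (2 * Pd' x))
    / (Pd x)^3

lemma hasDerivAt_inner1 (x : ℝ) : HasDerivAt (fun x : ℝ => x^2 - x - 1) (2*x - 1) x := by
  have h := ((hasDerivAt_pow 2 x).sub (hasDerivAt_id' (x := x))).sub_const 1
  have e : 2*x - 1 = ((2:ℕ):ℝ) * x^(2-1) - 1 := by push_cast; ring
  rw [e]; exact h

lemma hasDerivAt_inner2 (x : ℝ) : HasDerivAt (fun x : ℝ => x^2 + 4*x - 1) (2*x + 4) x := by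
  have h := ((hasDerivAt_pow 2 x).add ((hasDerivAt_id' (x := x)).const_mul 4)).sub_const 1
  have e : 2*x + 4 = ((2:ℕ):ℝ) * x^(2-1) + 4*1 := by push_cast; ring
  rw [e]; exact h

lemma hasDerivAt_sq1 (x : ℝ) : HasDerivAt (fun x : ℝ => x^2 - 1) (2*x) x := by
  have h := (hasDerivAt_pow 2 x).sub_const 1
  have e : 2*x = ((2:ℕ):ℝ) * x^(2-1) := by push_cast; ring
  rw [e]; exact h

lemma hasDerivAt_q1pow (n : ℕ) (x : ℝ) :
    HasDerivAt (fun x : ℝ => (x^2 - x - 1)^n) ((n:ℝ)*(x^2-x-1)^(n-1)*(2*x-1)) x :=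
  (hasDerivAt_inner1 x).pow n

lemma hasDerivAt_q2pow (n : ℕ) (x : ℝ) :
    HasDerivAt (fun x : ℝ => (x^2 + 4*x - 1)^n) ((n:ℝ)*(x^2+4*x-1)^(n-1)*(2*x+4)) x :=
  (hasDerivAt_inner2 x).pow n

lemma hasDerivAt_Pn (x : ℝ) : HasDerivAt Pn (Pn' x) x := by
  have h := ((hasDerivAt_id' (x := x)).const_mul 64).mul (hasDerivAt_q1pow 5 x)
  have e : Pn' x = 64 * 1 * (x^2-x-1)^5
      + 64 * x * (((5:ℕ):ℝ)*(x^2-x-1)^(5-1)*(2*x-1)) := by rw [Pn']; push_cast; ring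
  rw [e]; exact h

lemma hasDerivAt_Pd (x : ℝ) : HasDerivAt Pd (Pd' x) x := by
  have h := (hasDerivAt_sq1 x).mul (hasDerivAt_q2pow 5 x)
  have e : Pd' x = 2*x * (x^2+4*x-1)^5
      + (x^2-1) * (((5:ℕ):ℝ)*(x^2+4*x-1)^(5-1)*(2*x+4)) := by rw [Pd']; push_cast; ring
  rw [e]; exact h

lemma hasDerivAt_Pn' (x : ℝ) : HasDerivAt Pn' (Pn'' x) x := by
  have hc : HasDerivAt (fun x : ℝ => 5 * (x^2 - x - 1)^4 * (2*x - 1))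
      ((5 * (((4:ℕ):ℝ)*(x^2-x-1)^(4-1)*(2*x-1))) * (2*x-1) + (5 * (x^2-x-1)^4) * (2*1)) x :=
    (((hasDerivAt_q1pow 4 x).const_mul 5).mul (((hasDerivAt_id' (x := x)).const_mul 2).sub_const 1))
  have hb := ((hasDerivAt_id' (x := x)).const_mul 64).mul hc
  have h := ((hasDerivAt_q1pow 5 x).const_mul 64).add hb
  have e : Pn'' x = 64 * (((5:ℕ):ℝ)*(x^2-x-1)^(5-1)*(2*x-1))
      + (64 * 1 * (5 * (x^2 - x - 1)^4 * (2*x - 1))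
        + 64 * x * ((5 * (((4:ℕ):ℝ)*(x^2-x-1)^(4-1)*(2*x-1))) * (2*x-1)
          + (5 * (x^2-x-1)^4) * (2*1))) := by rw [Pn'']; push_cast; ring
  rw [e]; exact h

lemma hasDerivAt_Pd' (x : ℝ) : HasDerivAt Pd' (Pd'' x) x := by
  have ha := ((hasDerivAt_id' (x := x)).const_mul 2).mul (hasDerivAt_q2pow 5 x)
  have hc : HasDerivAt (fun x : ℝ => 5 * (x^2 + 4*x - 1)^4 * (2*x + 4))
      ((5 * (((4:ℕ):ℝ)*(x^2+4*x-1)^(4-1)*(2*x+4))) * (2*x+4) + (5 * (x^2+4*x-1)^4) * (2*1)) x :=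
    (((hasDerivAt_q2pow 4 x).const_mul 5).mul (((hasDerivAt_id' (x := x)).const_mul 2).add_const 4))
  have hb := (hasDerivAt_sq1 x).mul hc
  have h := ha.add hb
  have e : Pd'' x = (2 * 1 * (x^2+4*x-1)^5 + 2*x*(((5:ℕ):ℝ)*(x^2+4*x-1)^(5-1)*(2*x+4)))
      + (2*x * (5 * (x^2 + 4*x - 1)^4 * (2*x + 4))
        + (x^2-1) * ((5 * (((4:ℕ):ℝ)*(x^2+4*x-1)^(4-1)*(2*x+4))) * (2*x+4)
          + (5 * (x^2+4*x-1)^4) * (2*1))) := by rw [Pd'']; push_cast; ring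
  rw [e]; exact h

lemma hasDerivAt_phi2 {x : ℝ} (h : Pd x ≠ 0) : HasDerivAt phi2 (phid x) x :=
  (hasDerivAt_Pn x).div (hasDerivAt_Pd x) h

lemma hasDerivAt_phid {x : ℝ} (h : Pd x ≠ 0) : HasDerivAt phid (phidd x) x := by
  have hnum : HasDerivAt (fun x => Pn' x * Pd x - Pn x * Pd' x)
      ((Pn'' x * Pd x + Pn' x * Pd' x) - (Pn' x * Pd' x + Pn x * Pd'' x)) x :=
    ((hasDerivAt_Pn' x).mul (hasDerivAt_Pd x)).sub ((hasDerivAt_Pn x).mul (hasDerivAt_Pd' x))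
  have hden : HasDerivAt (fun x => (Pd x)^2) (2 * (Pd x)^1 * Pd' x) x := by
    have h := (hasDerivAt_Pd x).pow 2
    have e : 2 * (Pd x)^1 * Pd' x = ((2:ℕ):ℝ) * (Pd x)^(2-1) * Pd' x := by push_cast; ring
    rw [e]; exact h
  have hdiv := hnum.div hden (pow_ne_zero 2 h)
  refine hdiv.congr_deriv (Eq.symm ?_)
  rw [phidd, div_eq_div_iff (by positivity) (by positivity)]
  ring

noncomputable def rfn (x : ℝ) : ℝ :=
  7/20/(1+x) + 1/20/(1-x) + (4+2*x)/(4*(1-4*x-x^2))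
noncomputable def rfnd (x : ℝ) : ℝ :=
  -(7/20)/(1+x)^2 + (1/20)/(1-x)^2
    + (2*(1-4*x-x^2) + (4+2*x)^2)/(4*(1-4*x-x^2)^2)

lemma hasDerivAt_rfn {x : ℝ} (h1 : 1+x ≠ 0) (h2 : 1-x ≠ 0) (h3 : 1-4*x-x^2 ≠ 0) :
    HasDerivAt rfn (rfnd x) x := by
  have ha : HasDerivAt (fun x : ℝ => 1+x) 1 x := (hasDerivAt_id' (x := x)).const_add 1
  have hb : HasDerivAt (fun x : ℝ => 1-x) (-1) x := by
    have h := (hasDerivAt_id' (x := x)).const_sub 1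
    norm_num at h
    exact h
  have hcc : HasDerivAt (fun x : ℝ => 1-4*x-x^2) (-(4*1) - ((2:ℕ):ℝ)*x^(2-1)) x :=
    (((hasDerivAt_id' (x := x)).const_mul 4).const_sub 1).sub (hasDerivAt_pow 2 x)
  have hc : HasDerivAt (fun x : ℝ => 4*(1-4*x-x^2)) (4*(-(4*1) - ((2:ℕ):ℝ)*x^(2-1))) x :=
    hcc.const_mul 4
  have h4 : 4*(1-4*x-x^2) ≠ 0 := by
    simpa using mul_ne_zero (by norm_num : (4:ℝ) ≠ 0) h3
  have h1' := (hasDerivAt_const x (7/20:ℝ)).div ha h1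
  have h2' := (hasDerivAt_const x (1/20:ℝ)).div hb h2
  have h3' := ((((hasDerivAt_id' (x := x)).const_mul 2).const_add 4)).div hc h4
  have h := (h1'.add h2').add h3'
  refine h.congr_deriv (Eq.symm ?_)
  rw [rfnd]
  have e1 : (1+x)^2 ≠ 0 := pow_ne_zero _ h1
  have e2 : (1-x)^2 ≠ 0 := pow_ne_zero _ h2
  have e3 : (4*(1-4*x-x^2))^2 ≠ 0 := pow_ne_zero _ h4
  have e4 : (1-4*x-x^2)^2 ≠ 0 := pow_ne_zero _ h3
  field_simp
  ring

lemma star {x : ℝ} (h1 : 1+x ≠ 0) (h2 : 1-x ≠ 0) (h3 : 1-4*x-x^2 ≠ 0)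
    (hd1 : x^2-1 ≠ 0) (hd2 : x^2+4*x-1 ≠ 0) :
    (phi2 x * (1 - phi2 x) * phid x) * (rfnd x + rfn x^2)
    + ((4/5 - (13/10)*phi2 x) * phid x^2 - phi2 x*(1-phi2 x)*phidd x) * rfn x
    - ((7/20)*(-1/20)) * phid x^3 = 0 := by
  have hPd : Pd x ≠ 0 := by
    rw [Pd]; exact mul_ne_zero hd1 (pow_ne_zero _ hd2)
  rw [show phi2 x = Pn x / Pd x from rfl, phid, phidd, rfn, rfnd]
  rw [Pn, Pd, Pn', Pd', Pn'', Pd''] at *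
  have k1 : x * (x + 4) - 1 ≠ 0 := by convert hd2 using 1; ring
  have k2 : 1 - x * 4 - x ^ 2 ≠ 0 := by convert h3 using 1; ring
  field_simp
  ring

noncomputable def pser : FormalMultilinearSeries ℝ ℝ ℝ :=
  fun n => qc n • ContinuousMultilinearMap.mkPiAlgebraFin ℝ n ℝ

lemma pser_norm_le (n : ℕ) : ‖pser n‖ ≤ 1 := by
  rw [pser]
  refine le_trans (ContinuousMultilinearMap.opNorm_smul_le _ _) ?_
  have h2 : ‖ContinuousMultilinearMap.mkPiAlgebraFin ℝ n ℝ‖ ≤ 1 := by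
    cases n with
    | zero => rw [ContinuousMultilinearMap.norm_mkPiAlgebraFin_zero]; simp
    | succ m => exact ContinuousMultilinearMap.norm_mkPiAlgebraFin_succ_le
  calc ‖qc n‖ * ‖ContinuousMultilinearMap.mkPiAlgebraFin ℝ n ℝ‖ ≤ 1 * 1 := by
        apply mul_le_mul _ h2 (norm_nonneg _) zero_le_one
        rw [Real.norm_eq_abs]; exact qc_abs_le n
    _ = 1 := one_mul 1

lemma hasFPS : HasFPowerSeriesOnBall ff pser 0 (((3/4 : ℝ≥0)) : ℝ≥0∞) := by
  constructor
  · apply FormalMultilinearSeries.le_radius_of_bound pser 1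
    intro n
    have h1 : ((3/4 : ℝ≥0) : ℝ)^n ≤ 1 := by
      apply pow_le_one₀ (by positivity)
      norm_num
    have := pser_norm_le n
    nlinarith [norm_nonneg (pser n), pow_nonneg (show (0:ℝ) ≤ ((3/4:ℝ≥0):ℝ) by positivity) n]
  · exact ENNReal.coe_pos.mpr (by norm_num)
  · intro y hy
    rw [mem_emetric_ball_zero_iff, enorm_eq_nnnorm, ENNReal.coe_lt_coe] at hy
    have hy' : |y| < 3/4 := by
      have := (NNReal.coe_lt_coe).mpr hy
      rw [coe_nnnorm, Real.norm_eq_abs] at this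
      simpa using this
    have hsum := (summable_t0 hy').hasSum
    rw [zero_add]
    refine HasSum.congr_fun hsum fun n => ?_
    simp [pser, ContinuousMultilinearMap.mkPiAlgebraFin_apply, List.ofFn_const,
      List.prod_replicate, smul_eq_mul]

lemma analyticAt_ff {w : ℝ} (hw : |w| < 3/4) : AnalyticAt ℝ ff w := by
  apply hasFPS.analyticAt_of_mem
  rw [mem_emetric_ball_zero_iff, enorm_eq_nnnorm, ENNReal.coe_lt_coe]
  rw [← NNReal.coe_lt_coe, coe_nnnorm, Real.norm_eq_abs]
  simpa using hw

lemma analyticAt_deriv {g : ℝ → ℝ} {z : ℝ} (h : AnalyticAt ℝ g z) :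
    AnalyticAt ℝ (deriv g) z := by
  obtain ⟨t, hts, hto, htz⟩ := _root_.mem_nhds_iff.mp h.eventually_analyticAt
  exact AnalyticOnNhd.deriv (fun x hx => hts hx) z htz

lemma key_zero {v al be : ℝ → ℝ}
    (hv : AnalyticAt ℝ v 0)
    (hal : ContinuousAt al 0) (hbe : ContinuousAt be 0)
    (hal0 : 0 < al 0) (hbe0 : 0 < be 0)
    (hode : ∀ᶠ x in 𝓝 (0:ℝ), x * al x * deriv v x + be x * v x = 0) :
    ∀ᶠ x in 𝓝 (0:ℝ), v x = 0 := by
  rw [← analyticOrderAt_eq_top]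
  by_contra hne
  obtain ⟨n, hn⟩ : ∃ n : ℕ, analyticOrderAt v 0 = (n : ℕ∞) := by
    cases ho : analyticOrderAt v 0 with
    | top => exact absurd ho hne
    | coe m => exact ⟨m, rfl⟩
  obtain ⟨g, hg, hg0, heqq⟩ := hv.analyticOrderAt_eq_natCast.mp hn
  have heq : ∀ᶠ z in 𝓝 (0:ℝ), v z = z^n * g z := by
    filter_upwards [heqq] with z hz
    simpa using hz
  have hgan : ∀ᶠ y in 𝓝 (0:ℝ), AnalyticAt ℝ g y := hg.eventually_analyticAt
  have heq' : ∀ᶠ y in 𝓝 (0:ℝ), v =ᶠ[𝓝 y] fun z => z^n * g z := heq.eventually_nhds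
  have hdv : ∀ᶠ y in 𝓝 (0:ℝ), deriv v y = (n:ℝ) * y^(n-1) * g y + y^n * deriv g y := by
    filter_upwards [heq', hgan] with y hy hgy
    have hder : HasDerivAt (fun z => z^n * g z) ((n:ℝ)*y^(n-1) * g y + y^n * deriv g y) y :=
      (hasDerivAt_pow n y).mul (hgy.differentiableAt.hasDerivAt)
    rw [Filter.EventuallyEq.deriv_eq hy, hder.deriv]
  set ψ : ℝ → ℝ := fun y => (n:ℝ) * al y * g y + y * al y * deriv g y + be y * g y with hψ
  have main : ∀ᶠ y in 𝓝 (0:ℝ), y^n * ψ y = 0 := by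
    filter_upwards [hode, hdv, heq] with y h1 h2 h3
    have hxy : y * ((n:ℝ) * y^(n-1)) = (n:ℝ) * y^n := by
      cases n with
      | zero => simp
      | succ m => rw [pow_succ]; push_cast; ring
    have : y^n * ψ y = y * al y * deriv v y + be y * v y := by
      rw [h2, h3, hψ]
      linear_combination (-(al y * g y)) * hxy
    rw [this, h1]
  have hψ0 : ∀ᶠ y in 𝓝[≠] (0:ℝ), ψ y = 0 := by
    rw [eventually_nhdsWithin_iff]
    filter_upwards [main] with y hy hy0
    have hyn : y^n ≠ 0 := pow_ne_zero n (by simpa using hy0)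
    exact (mul_eq_zero.mp hy).resolve_left hyn
  have hψcont : ContinuousAt ψ 0 := by
    have hgc : ContinuousAt g 0 := hg.continuousAt
    have hgdc : ContinuousAt (deriv g) 0 := (analyticAt_deriv hg).continuousAt
    exact (((continuousAt_const (y := (n:ℝ))).mul hal).mul hgc).add
      (((continuousAt_id.mul hal).mul hgdc).add (hbe.mul hgc)) |>.congr (by
        filter_upwards with y; simp only [Pi.mul_apply, Pi.add_apply, id_eq]; rw [hψ]; ring)
  have hψat0 : ψ 0 = 0 := by
    have ht1 : Filter.Tendsto ψ (𝓝[≠] (0:ℝ)) (𝓝 (ψ 0)) :=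
      hψcont.tendsto.mono_left nhdsWithin_le_nhds
    have ht2 : Filter.Tendsto ψ (𝓝[≠] (0:ℝ)) (𝓝 0) :=
      Filter.Tendsto.congr' (by filter_upwards [hψ0] with y hy; exact hy.symm) tendsto_const_nhds
    exact tendsto_nhds_unique ht1 ht2
  have : ψ 0 = g 0 * ((n:ℝ) * al 0 + be 0) := by rw [hψ]; simp; ring
  rw [this] at hψat0
  have hpos : (0:ℝ) < (n:ℝ) * al 0 + be 0 := by positivity
  exact hg0 (by
    rcases mul_eq_zero.mp hψat0 with h | h
    · exact h
    · exact absurd h hpos.ne')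

def Good (x : ℝ) : Prop :=
  |phi2 x| < 3/4 ∧ x^2-1 ≠ 0 ∧ x^2+4*x-1 ≠ 0 ∧ 0 < 1+x ∧ 0 < 1-x ∧ 0 < 1-4*x-x^2

lemma Good.pd {x : ℝ} (h : Good x) : Pd x ≠ 0 :=
  mul_ne_zero h.2.1 (pow_ne_zero _ h.2.2.1)

lemma phi2_zero : phi2 0 = 0 := by norm_num [phi2]

lemma eventually_good : ∀ᶠ x in 𝓝 (0:ℝ), Good x := by
  have hc : ContinuousAt phi2 0 := by
    apply ContinuousAt.div (by fun_prop) (by fun_prop)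
    norm_num
  have e1 : ∀ᶠ x in 𝓝 (0:ℝ), |phi2 x| < 3/4 := by
    have : ∀ᶠ x in 𝓝 (0:ℝ), phi2 x ∈ Set.Ioo (-(3/4):ℝ) (3/4) := by
      apply hc.eventually_mem
      rw [phi2_zero]
      exact Ioo_mem_nhds (by norm_num) (by norm_num)
    filter_upwards [this] with x hx
    rw [abs_lt]; exact ⟨hx.1, hx.2⟩
  have e2 : ∀ᶠ x in 𝓝 (0:ℝ), x^2-1 ≠ 0 := by
    have : ContinuousAt (fun x : ℝ => x^2-1) 0 := by fun_prop
    have := this.eventually_mem (s := {(0:ℝ)}ᶜ) (by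
      apply IsOpen.mem_nhds isOpen_compl_singleton
      norm_num)
    filter_upwards [this] with x hx using hx
  have e3 : ∀ᶠ x in 𝓝 (0:ℝ), x^2+4*x-1 ≠ 0 := by
    have : ContinuousAt (fun x : ℝ => x^2+4*x-1) 0 := by fun_prop
    have := this.eventually_mem (s := {(0:ℝ)}ᶜ) (by
      apply IsOpen.mem_nhds isOpen_compl_singleton
      norm_num)
    filter_upwards [this] with x hx using hx
  have e4 : ∀ᶠ x in 𝓝 (0:ℝ), 0 < 1+x := by
    have : ContinuousAt (fun x : ℝ => 1+x) 0 := by fun_prop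
    have := this.eventually_mem (s := Set.Ioi (0:ℝ)) (by
      apply IsOpen.mem_nhds isOpen_Ioi
      norm_num)
    filter_upwards [this] with x hx using hx
  have e5 : ∀ᶠ x in 𝓝 (0:ℝ), 0 < 1-x := by
    have : ContinuousAt (fun x : ℝ => 1-x) 0 := by fun_prop
    have := this.eventually_mem (s := Set.Ioi (0:ℝ)) (by
      apply IsOpen.mem_nhds isOpen_Ioi
      norm_num)
    filter_upwards [this] with x hx using hx
  have e6 : ∀ᶠ x in 𝓝 (0:ℝ), 0 < 1-4*x-x^2 := by
    have : ContinuousAt (fun x : ℝ => 1-4*x-x^2) 0 := by fun_prop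
    have := this.eventually_mem (s := Set.Ioi (0:ℝ)) (by
      apply IsOpen.mem_nhds isOpen_Ioi
      norm_num)
    filter_upwards [this] with x hx using hx
  filter_upwards [e1, e2, e3, e4, e5, e6] with x h1 h2 h3 h4 h5 h6
  exact ⟨h1, h2, h3, h4, h5, h6⟩

noncomputable def hh (x : ℝ) : ℝ := ff (phi2 x)
noncomputable def hh1 (x : ℝ) : ℝ := ff1 (phi2 x) * phid x
noncomputable def hh2 (x : ℝ) : ℝ := (ff2 (phi2 x) * phid x) * phid x + ff1 (phi2 x) * phidd x
noncomputable def vf (x : ℝ) : ℝ := hh1 x - rfn x * hh x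
noncomputable def v1f (x : ℝ) : ℝ := hh2 x - (rfnd x * hh x + rfn x * hh1 x)
noncomputable def alf (x : ℝ) : ℝ := 64*(x^2-x-1)^5 / Pd x * (1 - phi2 x) * phid x
noncomputable def bef (x : ℝ) : ℝ :=
  ((4/5 - (13/10)*phi2 x) * phid x^2 - phi2 x*(1-phi2 x)*phidd x)
    + (phi2 x*(1-phi2 x)*phid x) * rfn x

lemma Good.hasDerivAt_hh {x : ℝ} (h : Good x) : HasDerivAt hh (hh1 x) x :=
  (hasDerivAt_ff h.1).comp x (hasDerivAt_phi2 h.pd)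

lemma Good.hasDerivAt_hh1 {x : ℝ} (h : Good x) : HasDerivAt hh1 (hh2 x) x :=
  ((hasDerivAt_ff1 h.1).comp x (hasDerivAt_phi2 h.pd)).mul (hasDerivAt_phid h.pd)

lemma Good.hasDerivAt_vf {x : ℝ} (h : Good x) : HasDerivAt vf (v1f x) x :=
  h.hasDerivAt_hh1.sub ((hasDerivAt_rfn h.2.2.2.1.ne' h.2.2.2.2.1.ne' h.2.2.2.2.2.ne').mul
    h.hasDerivAt_hh)

lemma xalf {x : ℝ} (h : Good x) : x * alf x = phi2 x * (1 - phi2 x) * phid x := by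
  rw [alf, show phi2 x = Pn x / Pd x from rfl, Pn]
  have := h.pd
  field_simp

lemma vode {x : ℝ} (h : Good x) : x * alf x * v1f x + bef x * vf x = 0 := by
  have hode := ffODE h.1
  have hstar := star h.2.2.2.1.ne' h.2.2.2.2.1.ne' h.2.2.2.2.2.ne' h.2.1 h.2.2.1
  have hA := xalf h
  simp only [v1f, vf, hh2, hh1, hh, bef]
  linear_combination ((ff2 (phi2 x) * phid x) * phid x + ff1 (phi2 x) * phidd x
      - (rfnd x * ff (phi2 x) + rfn x * (ff1 (phi2 x) * phid x))) * hA
    + (phid x)^3 * hode - (ff (phi2 x)) * hstar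

lemma contAt_phi2 : ContinuousAt phi2 0 := by
  apply ContinuousAt.div (by fun_prop) (by fun_prop)
  norm_num

lemma pd0 : Pd 0 ≠ 0 := by norm_num [Pd]

lemma contAt_phid : ContinuousAt phid 0 :=
  (hasDerivAt_phid pd0).differentiableAt.continuousAt

lemma contAt_phidd : ContinuousAt phidd 0 := by
  unfold phidd Pn Pd Pn' Pd' Pn'' Pd''
  apply ContinuousAt.div (by fun_prop) (by fun_prop)
  norm_num

lemma contAt_rfn : ContinuousAt rfn 0 :=
  (hasDerivAt_rfn (by norm_num) (by norm_num) (by norm_num)).differentiableAt.continuousAt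

lemma contAt_alf : ContinuousAt alf 0 := by
  apply ContinuousAt.mul (ContinuousAt.mul ?_ (continuousAt_const.sub contAt_phi2)) contAt_phid
  unfold Pd
  apply ContinuousAt.div (by fun_prop) (by fun_prop)
  norm_num

lemma contAt_bef : ContinuousAt bef 0 := by
  apply ContinuousAt.add
  · apply ContinuousAt.sub
    · exact (continuousAt_const.sub (continuousAt_const.mul contAt_phi2)).mul (contAt_phid.pow 2)
    · exact (contAt_phi2.mul (continuousAt_const.sub contAt_phi2)).mul contAt_phidd
  · exact ((contAt_phi2.mul (continuousAt_const.sub contAt_phi2)).mul contAt_phid).mul contAt_rfn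

lemma phid_zero : phid 0 = -64 := by norm_num [phid, Pn, Pd, Pn', Pd']

lemma alf_zero : alf 0 = 4096 := by norm_num [alf, phi2_zero, phid_zero, Pd]

lemma bef_zero : bef 0 = 16384/5 := by norm_num [bef, phi2_zero, phid_zero]

lemma an_phi2 : AnalyticAt ℝ phi2 0 := by
  have hn : AnalyticAt ℝ (fun x : ℝ => 64 * x * (x ^ 2 - x - 1) ^ 5) 0 :=
    (analyticAt_const.mul analyticAt_id).mul
      ((((analyticAt_id.pow 2).sub analyticAt_id).sub analyticAt_const).pow 5)
  have hd : AnalyticAt ℝ (fun x : ℝ => (x ^ 2 - 1) * (x ^ 2 + 4 * x - 1) ^ 5) 0 :=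
    ((analyticAt_id.pow 2).sub analyticAt_const).mul
      ((((analyticAt_id.pow 2).add (analyticAt_const.mul analyticAt_id)).sub
        analyticAt_const).pow 5)
  exact hn.div hd (by norm_num)

lemma an_hh : AnalyticAt ℝ hh 0 := by
  have hf : AnalyticAt ℝ ff (phi2 0) := by
    apply analyticAt_ff
    rw [phi2_zero]
    norm_num
  exact hf.comp an_phi2

lemma an_rfn : AnalyticAt ℝ rfn 0 := by
  apply AnalyticAt.add
  apply AnalyticAt.add
  · exact analyticAt_const.div (analyticAt_const.add analyticAt_id) (by norm_num)
  · exact analyticAt_const.div (analyticAt_const.sub analyticAt_id) (by norm_num)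
  · exact (analyticAt_const.add (analyticAt_const.mul analyticAt_id)).div
      (analyticAt_const.mul ((analyticAt_const.sub
        (analyticAt_const.mul analyticAt_id)).sub (analyticAt_id.pow 2))) (by norm_num)

lemma an_vf : AnalyticAt ℝ vf 0 := by
  have hveq : ∀ᶠ x in 𝓝 (0:ℝ), vf x = deriv hh x - rfn x * hh x := by
    filter_upwards [eventually_good] with x hx
    rw [vf, hx.hasDerivAt_hh.deriv]
  have han : AnalyticAt ℝ (fun x => deriv hh x - rfn x * hh x) 0 :=
    (analyticAt_deriv an_hh).sub (an_rfn.mul an_hh)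
  exact han.congr (EventuallyEq.symm hveq)

lemma eventually_vf_zero : ∀ᶠ x in 𝓝 (0:ℝ), vf x = 0 := by
  apply key_zero an_vf contAt_alf contAt_bef (by rw [alf_zero]; norm_num)
    (by rw [bef_zero]; norm_num)
  filter_upwards [eventually_good] with x hx
  rw [hx.hasDerivAt_vf.deriv]
  exact vode hx

noncomputable def Uf (x : ℝ) : ℝ :=
  (1 + x) ^ (-(7/20) : ℝ) * (1 - x) ^ ((1/20) : ℝ) * (1 - 4 * x - x ^ 2) ^ ((1/4) : ℝ)

lemma Uf_hasDeriv {x : ℝ} (h : Good x) : HasDerivAt Uf (-rfn x * Uf x) x := by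
  obtain ⟨-, -, -, p1, p2, p3⟩ := h
  have ha : HasDerivAt (fun x : ℝ => 1+x) 1 x := (hasDerivAt_id' (x := x)).const_add 1
  have hb : HasDerivAt (fun x : ℝ => 1-x) (-1) x := by
    have h := (hasDerivAt_id' (x := x)).const_sub 1
    norm_num at h; exact h
  have hcc : HasDerivAt (fun x : ℝ => 1-4*x-x^2) (-(4*1) - ((2:ℕ):ℝ)*x^(2-1)) x :=
    (((hasDerivAt_id' (x := x)).const_mul 4).const_sub 1).sub (hasDerivAt_pow 2 x)
  have h1 := ha.rpow_const (p := (-(7/20) : ℝ)) (Or.inl p1.ne')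
  have h2 := hb.rpow_const (p := ((1/20) : ℝ)) (Or.inl p2.ne')
  have h3 := hcc.rpow_const (p := ((1/4) : ℝ)) (Or.inl p3.ne')
  have hall := (h1.mul h2).mul h3
  refine hall.congr_deriv (Eq.symm ?_)
  rw [Real.rpow_sub p1, Real.rpow_sub p2, Real.rpow_sub p3, Real.rpow_one,
    Uf, rfn]
  simp only [Pi.mul_apply, Real.rpow_one]
  push_cast
  field_simp
  ring

lemma ff_zero : ff 0 = 1 := by
  rw [ff, tsum_eq_single 0]
  · rw [qc_zero]; norm_num
  · intro n hn
    rw [zero_pow hn, mul_zero]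

lemma Uf_zero : Uf 0 = 1 := by
  norm_num [Uf]

theorem main : ∃ ε > (0 : ℝ), ∀ x : ℝ, |x| < ε →
    hyp (7/20) (-1/20) (4/5) (phi2 x) =
      (1 + x) ^ ((7/20) : ℝ) * (1 - x) ^ (-(1/20) : ℝ) *
        (1 - 4 * x - x ^ 2) ^ (-(1/4) : ℝ) := by
  have E := eventually_good.and eventually_vf_zero
  rw [Metric.eventually_nhds_iff] at E
  obtain ⟨δ, hδ, hE⟩ := E
  refine ⟨δ, hδ, fun x hx => ?_⟩
  have hx' : dist x 0 < δ := by rwa [Real.dist_eq, sub_zero]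
  have hGd : ∀ y ∈ ball (0:ℝ) δ, HasDerivAt (fun z => hh z * Uf z) 0 y := by
    intro y hy
    obtain ⟨hg, hv⟩ := hE (mem_ball.mp hy)
    have hd := hg.hasDerivAt_hh.mul (Uf_hasDeriv hg)
    have hveq : hh1 y - rfn y * hh y = 0 := hv
    refine hd.congr_deriv (Eq.symm ?_)
    linear_combination (-(Uf y)) * hveq
  have hconst : hh x * Uf x = hh 0 * Uf 0 := by
    apply Convex.is_const_of_fderivWithin_eq_zero (𝕜 := ℝ) (convex_ball (0:ℝ) δ)
      (f := fun z => hh z * Uf z)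
    · exact fun y hy => ((hGd y hy).differentiableAt).differentiableWithinAt
    · intro y hy
      rw [fderivWithin_of_isOpen isOpen_ball hy, (hGd y hy).hasFDerivAt.fderiv]
      ext t
      simp
    · rwa [mem_ball, Real.dist_eq, sub_zero]
    · exact mem_ball_self hδ
  have h00 : hh 0 * Uf 0 = 1 := by
    rw [show hh 0 = ff (phi2 0) from rfl, phi2_zero, ff_zero, Uf_zero, mul_one]
  rw [h00] at hconst
  obtain ⟨hg, -⟩ := hE hx'
  obtain ⟨-, -, -, p1, p2, p3⟩ := hg
  have hhyp : hyp (7/20) (-1/20) (4/5) (phi2 x) = hh x := rfl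
  set R : ℝ := (1 + x) ^ ((7/20) : ℝ) * (1 - x) ^ (-(1/20) : ℝ) *
      (1 - 4 * x - x ^ 2) ^ (-(1/4) : ℝ) with hR
  have hU : Uf x * R = 1 := by
    have e1 : (1+x)^(-(7/20):ℝ) * (1+x)^((7/20):ℝ) = 1 := by
      rw [← Real.rpow_add p1]; norm_num
    have e2 : (1-x)^((1/20):ℝ) * (1-x)^(-(1/20):ℝ) = 1 := by
      rw [← Real.rpow_add p2]; norm_num
    have e3 : (1-4*x-x^2)^((1/4):ℝ) * (1-4*x-x^2)^(-(1/4):ℝ) = 1 := by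
      rw [← Real.rpow_add p3]; norm_num
    calc Uf x * R = ((1+x)^(-(7/20):ℝ) * (1+x)^((7/20):ℝ))
          * ((1-x)^((1/20):ℝ) * (1-x)^(-(1/20):ℝ))
          * ((1-4*x-x^2)^((1/4):ℝ) * (1-4*x-x^2)^(-(1/4):ℝ)) := by
          rw [Uf, hR]; ring
      _ = 1 := by rw [e1, e2, e3]; norm_num
  calc hyp (7/20) (-1/20) (4/5) (phi2 x) = hh x := hhyp
    _ = hh x * (Uf x * R) := by rw [hU, mul_one]
    _ = (hh x * Uf x) * R := by ring
    _ = R := by rw [hconst, one_mul]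

end DX

theorem stmt_13 :
    ∃ ε > (0 : ℝ), ∀ x : ℝ, |x| < ε →
      hyp (7/20) (-1/20) (4/5) (phi2 x) =
        (1 + x) ^ ((7/20) : ℝ) * (1 - x) ^ (-(1/20) : ℝ) *
          (1 - 4 * x - x ^ 2) ^ (-(1/4) : ℝ) := by
  exact DX.main
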